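/- Let G be a graph with a cut vertex x of degree 2 (x is a separation clique). Then in any minimum fill-in ordering of G, at the step when x is eliminated, x is simplicial in the current elimination graph, and moreover x has degree at most 1 at that point. -/

import Mathlib

open SimpleGraph

attribute [local instance] Classical.propDecidable

variable {V : Type*} [Fintype V] [DecidableEq V]

/-- The elimination graph `G_x`: delete `x` and complete its neighborhood to a clique.
(The eliminated vertex is kept as an isolated vertex.) -/
def elimG (G : SimpleGraph V) (x : V) : SimpleGraph V where
  Adj u v := u ≠ v ∧ u ≠ x ∧ v ≠ x ∧ (G.Adj u v ∨ (G.Adj x u ∧ G.Adj x v))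
  symm := by
    refine ⟨fun u v h => ?_⟩
    obtain ⟨h1, h2, h3, h4⟩ := h
    refine ⟨h1.symm, h3, h2, ?_⟩
    rcases h4 with h | ⟨h4, h5⟩
    · exact Or.inl h.symm
    · exact Or.inr ⟨h5, h4⟩
  loopless := ⟨fun v h => h.1 rfl⟩

/-- The deficiency `D(x)`: the set of unordered pairs of distinct, non-adjacent
neighbors of `x`. -/
noncomputable def deficiencyFinset (G : SimpleGraph V) (x : V) : Finset (Sym2 V) :=
  ((Finset.univ ×ˢ Finset.univ : Finset (V × V)).filter
    (fun p => p.1 ≠ p.2 ∧ G.Adj x p.1 ∧ G.Adj x p.2 ∧ ¬ G.Adj p.1 p.2)).image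
    (fun p => s(p.1, p.2))

/-- Successive elimination of a list of vertices. -/
def elimList : SimpleGraph V → List V → SimpleGraph V
  | G, [] => G
  | G, x :: xs => elimList (elimG G x) xs

/-- The fill-in of an elimination ordering given as a list: the total number of
edges added during the elimination process. -/
noncomputable def fillList : SimpleGraph V → List V → ℕ
  | _, [] => 0
  | G, x :: xs => (deficiencyFinset G x).card + fillList (elimG G x) xs

/-- The set of fill edges added during the elimination process. -/
noncomputable def fillEdges : SimpleGraph V → List V → Finset (Sym2 V)
  | _, [] => ∅
  | G, x :: xs => deficiencyFinset G x ∪ fillEdges (elimG G x) xs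

/-- A list is an (elimination) ordering if it enumerates every vertex exactly once. -/
def IsOrdering (L : List V) : Prop := L.Nodup ∧ ∀ v : V, v ∈ L

/-- The minimum fill-in `Φ(G)`. -/
noncomputable def minFillIn (G : SimpleGraph V) : ℕ :=
  sInf {n | ∃ L : List V, IsOrdering L ∧ fillList G L = n}

/-- A vertex is simplicial if its neighborhood is a clique. -/
def IsSimplicial (G : SimpleGraph V) (x : V) : Prop :=
  ∀ a b, G.Adj x a → G.Adj x b → a ≠ b → G.Adj a b

/-- `a` and `b` are indistinguishable: equal closed neighborhoods. -/
def Indistinguishable (G : SimpleGraph V) (a b : V) : Prop :=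
  a ≠ b ∧ insert a (G.neighborSet a) = insert b (G.neighborSet b)

/-- `a` and `b` are twins: equal open neighborhoods (hence non-adjacent). -/
def Twins (G : SimpleGraph V) (a b : V) : Prop :=
  a ≠ b ∧ G.neighborSet a = G.neighborSet b

/-- Chordality: no induced cycle of length at least 4, equivalently every cycle of
length at least 4 has a chord. -/
def IsChordal (G : SimpleGraph V) : Prop :=
  ∀ n : ℕ, 4 ≤ n → ∀ f : ZMod n → V, Function.Injective f →
    ¬ (∀ i j : ZMod n, G.Adj (f i) (f j) ↔ (j = i + 1 ∨ i = j + 1))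

/-- `T` is a triangulation of `G`: a set of non-edges whose addition makes `G` chordal. -/
def IsTriangulation (G : SimpleGraph V) (T : Finset (Sym2 V)) : Prop :=
  (∀ e ∈ T, ¬ e.IsDiag ∧ e ∉ G.edgeSet) ∧
    IsChordal (G ⊔ SimpleGraph.fromEdgeSet (↑T : Set (Sym2 V)))

/-- A minimum triangulation. -/
def IsMinTriangulation (G : SimpleGraph V) (T : Finset (Sym2 V)) : Prop :=
  IsTriangulation G T ∧ ∀ T' : Finset (Sym2 V), IsTriangulation G T' → T.card ≤ T'.card

/-- The graph obtained from `G` by deleting the vertices in `S`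
(deleted vertices are kept as isolated vertices). -/
def deleteSet (G : SimpleGraph V) (S : Set V) : SimpleGraph V where
  Adj u v := G.Adj u v ∧ u ∉ S ∧ v ∉ S
  symm := ⟨fun _ _ ⟨h, hu, hv⟩ => ⟨h.symm, hv, hu⟩⟩
  loopless := ⟨fun v h => G.irrefl h.1⟩

/-!
Let `a`, `b` be the two neighbours of `x` and `A` the component of `a` in `G - x`.
Given any elimination ordering `L`, keep only those fill edges of `L` that avoid `x` and do not
cross between `A` and the rest; together with `G` they form a graph `H` that still has a perfect
elimination ordering: `L` restricted to `A`, rearranged so that `a` comes last (any clique can be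
moved to the end of a perfect elimination ordering), then `x`, then the rest of `L`.
Eliminating `G` along that ordering creates only edges of `H`, so its fill is at most the number
of kept edges. If `L` has minimum fill, every fill edge of `L` is therefore kept. Hence when `x`
is eliminated its neighbours are among `a` and `b`, and they cannot both be, since otherwise the
crossing pair `ab` would be an edge of `G` or a fill edge.
-/

set_option linter.unusedSectionVars false

open List

section Elimination

variable {G H : SimpleGraph V} {x y p q : V} {L : List V}

@[simp]
lemma elimG_adj :
    (elimG G x).Adj p q ↔ p ≠ q ∧ p ≠ x ∧ q ≠ x ∧ (G.Adj p q ∨ (G.Adj x p ∧ G.Adj x q)) :=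
  Iff.rfl

lemma mem_deficiencyFinset :
    s(p, q) ∈ deficiencyFinset G x ↔ p ≠ q ∧ G.Adj x p ∧ G.Adj x q ∧ ¬ G.Adj p q := by
  simp only [deficiencyFinset, Finset.mem_image, Finset.mem_filter, Finset.mem_product,
    Finset.mem_univ, true_and, Prod.exists, Sym2.eq_iff]
  constructor
  · rintro ⟨p', q', h, ⟨rfl, rfl⟩ | ⟨rfl, rfl⟩⟩
    · exact h
    · exact ⟨h.1.symm, h.2.2.1, h.2.1, fun h' => h.2.2.2 h'.symm⟩
  · exact fun h => ⟨p, q, h, Or.inl ⟨rfl, rfl⟩⟩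

lemma deficiencyFinset_eq_empty_iff : deficiencyFinset G x = ∅ ↔ IsSimplicial G x := by
  simp only [Finset.eq_empty_iff_forall_notMem, Sym2.forall, mem_deficiencyFinset, IsSimplicial]
  grind

lemma elimG_mono (h : G ≤ H) (x : V) : elimG G x ≤ elimG H x := by
  intro p q
  simp only [elimG_adj]
  rintro ⟨hpq, hp, hq, hG | ⟨hxp, hxq⟩⟩
  · exact ⟨hpq, hp, hq, Or.inl (h hG)⟩
  · exact ⟨hpq, hp, hq, Or.inr ⟨h hxp, h hxq⟩⟩

lemma elimG_adj_iff_of_isSimplicial (hx : IsSimplicial G x) (hp : p ≠ x) (hq : q ≠ x) :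
    (elimG G x).Adj p q ↔ G.Adj p q := by
  simp only [elimG_adj]
  constructor
  · rintro ⟨hpq, -, -, h | ⟨hxp, hxq⟩⟩
    exacts [h, hx p q hxp hxq hpq]
  · exact fun h => ⟨h.ne, hp, hq, Or.inl h⟩

lemma isSimplicial_and_degree_le_one (h : ∀ p q, G.Adj x p → G.Adj x q → p = q) :
    IsSimplicial G x ∧ G.degree x ≤ 1 := by
  refine ⟨fun p q hp hq hpq => absurd (h p q hp hq) hpq, ?_⟩
  rw [← card_neighborFinset_eq_degree]
  exact Finset.card_le_one.2 fun p hp q hq =>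
    h p q ((mem_neighborFinset _ _ _).1 hp) ((mem_neighborFinset _ _ _).1 hq)

lemma exists_adj_of_mem_fillEdges (h : s(p, q) ∈ fillEdges G L) : ∃ w, G.Adj p w := by
  induction L generalizing G with
  | nil => simp [fillEdges] at h
  | cons y ys ih =>
    rcases Finset.mem_union.1 h with h | h
    · exact ⟨y, ((mem_deficiencyFinset.1 h).2.1).symm⟩
    · obtain ⟨w, -, -, -, hw | ⟨hyp, -⟩⟩ := ih h
      exacts [⟨w, hw⟩, ⟨y, hyp.symm⟩]

lemma ne_of_mem_fillEdges_elimG (h : s(p, q) ∈ fillEdges (elimG G y) L) : p ≠ y := by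
  obtain ⟨_, -, hp, -⟩ := exists_adj_of_mem_fillEdges h
  exact hp

lemma not_adj_of_mem_fillEdges (h : s(p, q) ∈ fillEdges G L) : ¬ G.Adj p q := by
  induction L generalizing G with
  | nil => simp [fillEdges] at h
  | cons y ys ih =>
    intro hpq
    rcases Finset.mem_union.1 h with h | h
    · exact (mem_deficiencyFinset.1 h).2.2.2 hpq
    · exact ih h ⟨hpq.ne, ne_of_mem_fillEdges_elimG h,
        ne_of_mem_fillEdges_elimG (Sym2.eq_swap ▸ h), Or.inl hpq⟩

lemma fillList_eq_card_fillEdges (G : SimpleGraph V) (L : List V) :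
    fillList G L = (fillEdges G L).card := by
  induction L generalizing G with
  | nil => rfl
  | cons y ys ih =>
    rw [fillList, fillEdges, Finset.card_union_of_disjoint, ih]
    refine Finset.disjoint_left.2 (Sym2.ind fun p q hD hF => ?_)
    obtain ⟨hpq, hyp, hyq, -⟩ := mem_deficiencyFinset.1 hD
    exact not_adj_of_mem_fillEdges hF ⟨hpq, hyp.ne', hyq.ne', Or.inr ⟨hyp, hyq⟩⟩

lemma adj_elimList (h : (elimList G L).Adj p q) : G.Adj p q ∨ s(p, q) ∈ fillEdges G L := by
  induction L generalizing G with
  | nil => exact Or.inl h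
  | cons y ys ih =>
    rcases ih h with h | h
    · obtain ⟨hpq, -, -, h | ⟨hyp, hyq⟩⟩ := h
      · exact Or.inl h
      by_cases hG : G.Adj p q
      · exact Or.inl hG
      · exact Or.inr (Finset.mem_union_left _ (mem_deficiencyFinset.2 ⟨hpq, hyp, hyq, hG⟩))
    · exact Or.inr (Finset.mem_union_right _ h)

lemma fillEdges_append (G : SimpleGraph V) (L M : List V) :
    fillEdges G (L ++ M) = fillEdges G L ∪ fillEdges (elimList G L) M := by
  induction L generalizing G with
  | nil => simp [fillEdges, elimList]
  | cons y ys ih => rw [List.cons_append, fillEdges, fillEdges, ih, Finset.union_assoc]; rfl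

lemma fillList_sup_fillEdges_eq_zero (G : SimpleGraph V) (L : List V) :
    fillList (G ⊔ fromEdgeSet ↑(fillEdges G L)) L = 0 := by
  induction L generalizing G with
  | nil => rfl
  | cons y ys ih =>
    set D := deficiencyFinset G y
    set F := fillEdges (elimG G y) ys
    have hF : ∀ p q, s(p, q) ∈ F → p ≠ y ∧ q ≠ y := fun p q h =>
      ⟨ne_of_mem_fillEdges_elimG h, ne_of_mem_fillEdges_elimG (Sym2.eq_swap ▸ h)⟩
    -- no fill edge contains `y`, so `y` has the same neighbours after adding the fill
    have hy : ∀ w, (G ⊔ fromEdgeSet ↑(D ∪ F)).Adj y w ↔ G.Adj y w := fun w => by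
      have hD : s(y, w) ∉ D := fun h => G.irrefl (mem_deficiencyFinset.1 h).2.1
      have := hF y w
      simp only [sup_adj, fromEdgeSet_adj, Finset.coe_union, Set.mem_union, Finset.mem_coe]
      tauto
    have hdef : deficiencyFinset (G ⊔ fromEdgeSet ↑(D ∪ F)) y = ∅ := by
      refine deficiencyFinset_eq_empty_iff.2 fun p q hp hq hpq => ?_
      rw [hy] at hp hq
      by_cases hG : G.Adj p q
      · exact Or.inl hG
      · exact Or.inr ⟨Finset.mem_coe.2 (Finset.mem_union_left _
          (mem_deficiencyFinset.2 ⟨hpq, hp, hq, hG⟩)), hpq⟩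
    have helim : elimG (G ⊔ fromEdgeSet ↑(D ∪ F)) y = elimG G y ⊔ fromEdgeSet ↑F := by
      ext p q
      have := hF p q
      simp only [elimG_adj, hy]
      simp only [sup_adj, elimG_adj, fromEdgeSet_adj, Finset.coe_union, Set.mem_union,
        Finset.mem_coe, D, mem_deficiencyFinset]
      tauto
    rw [fillEdges, fillList, hdef, helim, Finset.card_empty, zero_add]
    exact ih _

lemma mem_fillEdges_of_le {e : Sym2 V} (h : G ≤ H) (he : e ∈ fillEdges G L) :
    e ∈ fillEdges H L ∨ (e ∈ H.edgeSet ∧ e ∉ G.edgeSet) := by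
  induction L generalizing G H with
  | nil => simp [fillEdges] at he
  | cons y ys ih =>
    induction e using Sym2.ind with | _ p q => ?_
    by_cases hH : H.Adj p q
    · exact Or.inr ⟨hH, not_adj_of_mem_fillEdges he⟩
    rcases Finset.mem_union.1 he with hD | hF
    · obtain ⟨hpq, hyp, hyq, -⟩ := mem_deficiencyFinset.1 hD
      exact Or.inl (Finset.mem_union_left _ (mem_deficiencyFinset.2 ⟨hpq, h hyp, h hyq, hH⟩))
    · rcases ih (elimG_mono h y) hF with hF | ⟨hadj, -⟩
      · exact Or.inl (Finset.mem_union_right _ hF)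
      · obtain ⟨hpq, -, -, hH' | ⟨hyp, hyq⟩⟩ := hadj
        · exact absurd hH' hH
        · exact Or.inl (Finset.mem_union_left _ (mem_deficiencyFinset.2 ⟨hpq, hyp, hyq, hH⟩))

end Elimination

section PerfectElimination

variable {Γ Γ' : SimpleGraph V} {l m k k' : List V} {a p q y : V}

lemma mem_of_pair_sublist (h : [p, q] <+ l) : p ∈ l ∧ q ∈ l :=
  ⟨h.subset (by simp), h.subset (by simp)⟩

lemma pair_sublist_cons_iff : [p, q] <+ a :: l ↔ [p, q] <+ l ∨ (p = a ∧ q ∈ l) := by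
  simp [sublist_cons_iff, eq_comm]

lemma pair_sublist_append_iff :
    [p, q] <+ l ++ m ↔ [p, q] <+ l ∨ [p, q] <+ m ∨ (p ∈ l ∧ q ∈ m) := by
  rw [sublist_append_iff]
  constructor
  · rintro ⟨l₁, l₂, h, h₁, h₂⟩
    rcases l₁ with _ | ⟨r, _ | ⟨r', _ | ⟨r'', t⟩⟩⟩ <;> grind
  · rintro (h | h | ⟨hp, hq⟩)
    · exact ⟨[p, q], [], rfl, h, nil_sublist _⟩
    · exact ⟨[], [p, q], rfl, nil_sublist _, h⟩
    · exact ⟨[p], [q], rfl, singleton_sublist.2 hp, singleton_sublist.2 hq⟩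

lemma mem_right_of_pair_sublist_append (hnd : (l ++ m).Nodup) (h : [p, q] <+ l ++ m)
    (hp : p ∈ m) : q ∈ m := by
  have hpl : p ∉ l := fun hpl => (nodup_append.1 hnd).2.2 p hpl p hp rfl
  rcases pair_sublist_append_iff.1 h with h | h | h
  exacts [absurd (mem_of_pair_sublist h).1 hpl, (mem_of_pair_sublist h).2, absurd h.1 hpl]

/-- A perfect elimination ordering of `Γ`: the neighbours of each vertex that come after it
form a clique (`[y, u] <+ l` says that `y` precedes `u` in `l`). -/
def IsPEO (Γ : SimpleGraph V) (l : List V) : Prop :=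
  ∀ y u v, [y, u] <+ l → [y, v] <+ l → u ≠ v → Γ.Adj y u → Γ.Adj y v → Γ.Adj u v

lemma IsPEO.sublist (h : IsPEO Γ l) (hs : k <+ l) : IsPEO Γ k :=
  fun y u v hu hv => h y u v (hu.trans hs) (hv.trans hs)

lemma isPEO_congr (h : ∀ p ∈ l, ∀ q ∈ l, (Γ.Adj p q ↔ Γ'.Adj p q)) :
    IsPEO Γ l ↔ IsPEO Γ' l := by
  have key : ∀ {p q}, [p, q] <+ l → (Γ.Adj p q ↔ Γ'.Adj p q) := fun hpq =>
    h _ (mem_of_pair_sublist hpq).1 _ (mem_of_pair_sublist hpq).2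
  refine forall₃_congr fun _ _ _ => forall₂_congr fun hu hv => ?_
  rw [key hu, key hv, h _ (mem_of_pair_sublist hu).2 _ (mem_of_pair_sublist hv).2]

lemma isPEO_of_isClique (h : Γ.IsClique {u | u ∈ l}) : IsPEO Γ l :=
  fun _ _ _ hu hv huv _ _ => h (mem_of_pair_sublist hu).2 (mem_of_pair_sublist hv).2 huv

lemma isPEO_cons_iff :
    IsPEO Γ (y :: l) ↔
      (∀ u ∈ l, ∀ v ∈ l, u ≠ v → Γ.Adj y u → Γ.Adj y v → Γ.Adj u v) ∧ IsPEO Γ l := by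
  constructor
  · intro h
    exact ⟨fun u hu v hv => h y u v (pair_sublist_cons_iff.2 (Or.inr ⟨rfl, hu⟩))
      (pair_sublist_cons_iff.2 (Or.inr ⟨rfl, hv⟩)), h.sublist (sublist_cons_self y l)⟩
  · rintro ⟨hy, hl⟩ z u v hu hv
    rcases pair_sublist_cons_iff.1 hu with hu | ⟨rfl, hu'⟩ <;>
      rcases pair_sublist_cons_iff.1 hv with hv | ⟨hz, hv'⟩
    · exact hl z u v hu hv
    · exact hz ▸ hy u (mem_of_pair_sublist hu).2 v hv'
    · exact hy u hu' v (mem_of_pair_sublist hv).2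
    · exact hy u hu' v hv'

lemma IsPEO.append (hl : IsPEO Γ l) (hm : IsPEO Γ m)
    (hcross : ∀ y ∈ l, ∀ u ∈ m, ∀ v, [y, v] <+ l ++ m → u ≠ v →
      Γ.Adj y u → Γ.Adj y v → Γ.Adj u v) :
    IsPEO Γ (l ++ m) := by
  intro y u v hu hv huv hyu hyv
  by_cases hcr : y ∈ l ∧ (u ∈ m ∨ v ∈ m)
  · rcases hcr with ⟨hy, hu' | hv'⟩
    · exact hcross y hy u hu' v hv huv hyu hyv
    · exact (hcross y hy v hv' u hu huv.symm hyv hyu).symm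
  rcases pair_sublist_append_iff.1 hu with hu | hu | hu <;>
    rcases pair_sublist_append_iff.1 hv with hv | hv | hv
  · exact hl y u v hu hv huv hyu hyv
  all_goals first
    | exact hm y u v hu hv huv hyu hyv
    | exact absurd ⟨by grind [mem_of_pair_sublist], by grind [mem_of_pair_sublist]⟩ hcr

lemma fillList_eq_zero_iff_isPEO (hl : l.Nodup) (hcov : ∀ p q, Γ.Adj p q → p ∈ l) :
    fillList Γ l = 0 ↔ IsPEO Γ l := by
  induction l generalizing Γ with
  | nil => exact ⟨fun _ _ _ _ h => absurd h (by simp), fun _ => rfl⟩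
  | cons y t ih =>
    obtain ⟨hyt, ht⟩ := nodup_cons.1 hl
    have hnbr : ∀ p, Γ.Adj y p → p ∈ t := fun p hp =>
      (mem_cons.1 (hcov p y hp.symm)).resolve_left hp.ne'
    have hsimpl : IsSimplicial Γ y ↔
        ∀ u ∈ t, ∀ v ∈ t, u ≠ v → Γ.Adj y u → Γ.Adj y v → Γ.Adj u v :=
      ⟨fun h u _ v _ huv hu hv => h u v hu hv huv,
        fun h u v hu hv huv => h u (hnbr u hu) v (hnbr v hv) huv hu hv⟩
    have hcov' : ∀ p q, (elimG Γ y).Adj p q → p ∈ t := by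
      rintro p q ⟨-, hp, -, h | ⟨h, -⟩⟩
      exacts [(mem_cons.1 (hcov p q h)).resolve_left hp, hnbr p h]
    rw [fillList, Nat.add_eq_zero_iff, Finset.card_eq_zero, deficiencyFinset_eq_empty_iff,
      ih ht hcov', isPEO_cons_iff, ← hsimpl]
    refine and_congr_right fun hy => isPEO_congr fun p hp q hq => ?_
    exact elimG_adj_iff_of_isSimplicial hy (ne_of_mem_of_not_mem hp hyt)
      (ne_of_mem_of_not_mem hq hyt)

lemma IsPEO.append_of_isClique (h : IsPEO Γ (l ++ k)) (hk' : Γ.IsClique {u | u ∈ k'})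
    (hsub : ∀ y ∈ l, ∀ u ∈ k', Γ.Adj y u → u ∈ k) (hdisj : ∀ u ∈ k', u ∉ l) :
    IsPEO Γ (l ++ k') := by
  refine (h.sublist (sublist_append_left l k)).append (isPEO_of_isClique hk') ?_
  intro y hy u hu v hv huv hyu hyv
  have hv' : [y, v] <+ l ++ k := by
    rcases pair_sublist_append_iff.1 hv with hv | hv | ⟨-, hv⟩
    · exact hv.trans (sublist_append_left l k)
    · exact absurd hy (hdisj y (mem_of_pair_sublist hv).1)
    · exact pair_sublist_append_iff.2 (Or.inr (Or.inr ⟨hy, hsub y hy v hv hyv⟩))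
  exact h y u v (pair_sublist_append_iff.2 (Or.inr (Or.inr ⟨hy, hsub y hy u hu hyu⟩))) hv'
    huv hyu hyv

lemma IsPEO.append_perm_cons (h : IsPEO Γ (l ++ k)) (hnd : (l ++ k).Nodup) (hal : a ∉ l)
    (hk : ∀ w ∈ l ++ k, Γ.Adj a w → w ∈ k) (hka : ∀ w ∈ k, Γ.Adj a w)
    (hkC : Γ.IsClique {w | w ∈ k}) (hk' : k' ~ a :: k) : IsPEO Γ (l ++ k') := by
  have hmem : ∀ w, w ∈ k' ↔ w = a ∨ w ∈ k := fun w => by rw [hk'.mem_iff, mem_cons]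
  refine h.append_of_isClique (fun u hu v hv huv => ?_) (fun y hy u hu hyu => ?_) fun u hu hul => ?_
  · rcases (hmem u).1 hu with rfl | hu <;> rcases (hmem v).1 hv with rfl | hv
    exacts [absurd rfl huv, hka v hv, (hka u hu).symm, hkC hu hv huv]
  · refine ((hmem u).1 hu).resolve_left ?_
    rintro rfl
    exact (nodup_append.1 hnd).2.2 y hy y (hk y (mem_append_left k hy) hyu.symm) rfl
  · rcases (hmem u).1 hu with rfl | hu
    exacts [hal hul, (nodup_append.1 hnd).2.2 u hul u hu rfl]

lemma IsPEO.exists_perm_append_clique {C : Set V} (h : IsPEO Γ l) (hl : l.Nodup)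
    (hC : Γ.IsClique C) (hCl : ∀ u ∈ C, u ∈ l) :
    ∃ l₀ l₁, l₀ ++ l₁ ~ l ∧ IsPEO Γ (l₀ ++ l₁) ∧ ∀ w, w ∈ l₁ ↔ w ∈ C := by
  induction l generalizing C with
  | nil => exact ⟨[], [], Perm.refl _, h, fun w => ⟨by simp, fun hw => absurd (hCl w hw) (by simp)⟩⟩
  | cons a t ih =>
    obtain ⟨hat, ht⟩ := nodup_cons.1 hl
    obtain ⟨ha, htP⟩ := isPEO_cons_iff.1 h
    by_cases haC : a ∈ C
    swap
    · obtain ⟨l₀, l₁, hperm, hP, hl₁⟩ := ih htP ht hC fun u hu =>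
        (mem_cons.1 (hCl u hu)).resolve_left (by rintro rfl; exact haC hu)
      refine ⟨a :: l₀, l₁, hperm.cons a, isPEO_cons_iff.2 ⟨?_, hP⟩, hl₁⟩
      intro u hu v hv
      exact ha u (hperm.mem_iff.1 hu) v (hperm.mem_iff.1 hv)
    -- first move the neighbourhood of `a` in `t` to the end, then put `a` among it
    obtain ⟨l₀, k, hperm, hP, hk⟩ := ih htP ht (C := {w | w ∈ t ∧ Γ.Adj a w})
      (fun u hu v hv huv => ha u hu.1 v hv.1 huv hu.2 hv.2) fun u hu => hu.1
    have hnd := hperm.nodup_iff.2 ht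
    set k₁ := k.filter (fun w => !decide (w ∈ C))
    set k₂ := k.filter (fun w => w ∈ C)
    have hk' : k₁ ++ a :: k₂ ~ a :: k :=
      perm_middle.trans ((perm_append_comm.trans (filter_append_perm _ k)).cons a)
    refine ⟨l₀ ++ k₁, a :: k₂, ?_, ?_, fun w => ?_⟩
    · rw [append_assoc]
      exact (hk'.append_left l₀).trans (perm_middle.trans (hperm.cons a))
    · rw [append_assoc]
      refine hP.append_perm_cons hnd (fun h => hat (hperm.mem_iff.1 (mem_append_left k h)))
        (fun w hw haw => (hk w).2 ⟨hperm.mem_iff.1 hw, haw⟩) (fun w hw => ((hk w).1 hw).2)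
        (fun u hu v hv huv => ?_) hk'
      exact ha u ((hk u).1 hu).1 v ((hk v).1 hv).1 huv ((hk u).1 hu).2 ((hk v).1 hv).2
    · simp only [k₂, mem_cons, mem_filter, decide_eq_true_eq]
      refine ⟨by rintro (rfl | ⟨-, hw⟩) <;> assumption, fun hw => ?_⟩
      by_cases hwa : w = a
      · exact Or.inl hwa
      · exact Or.inr ⟨(hk w).2 ⟨(mem_cons.1 (hCl w hw)).resolve_left hwa,
          hC haC hw (Ne.symm hwa)⟩, hw⟩

lemma fillEdges_subset_of_isPEO {G : SimpleGraph V} {τ : List V} {T : Finset (Sym2 V)}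
    (hτ : IsOrdering τ) (h : IsPEO (G ⊔ fromEdgeSet ↑T) τ) : fillEdges G τ ⊆ T := by
  have h0 : fillEdges (G ⊔ fromEdgeSet ↑T) τ = ∅ := by
    rw [← Finset.card_eq_zero, ← fillList_eq_card_fillEdges]
    exact (fillList_eq_zero_iff_isPEO hτ.1 fun p _ _ => hτ.2 p).2 h
  intro e he
  rcases mem_fillEdges_of_le le_sup_left he with he | ⟨he, hG⟩
  · exact absurd (h0 ▸ he) (Finset.notMem_empty e)
  · induction e using Sym2.ind with | _ p q => ?_
    simp only [mem_edgeSet, sup_adj, fromEdgeSet_adj, Finset.mem_coe] at he hG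
    tauto

end PerfectElimination

section Separation

variable {G : SimpleGraph V} {x : V} {A : Set V} {L : List V}

def Separates (G : SimpleGraph V) (x : V) (A : Set V) : Prop :=
  x ∉ A ∧ ∀ u v, G.Adj u v → u ≠ x → v ≠ x → (u ∈ A ↔ v ∈ A)

def IsSideEdge (x : V) (A : Set V) (e : Sym2 V) : Prop :=
  x ∉ e ∧ ∀ p ∈ e, ∀ q ∈ e, (p ∈ A ↔ q ∈ A)

lemma isSideEdge_mk {p q : V} :
    IsSideEdge x A s(p, q) ↔ p ≠ x ∧ q ≠ x ∧ (p ∈ A ↔ q ∈ A) := by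
  simp only [IsSideEdge, Sym2.mem_iff]
  grind

lemma IsPEO.append_cons_of_separates {l m : List V} (hG : Separates G x A)
    (hl : IsPEO G l) (hm : IsPEO G m) (hlA : ∀ y ∈ l, y ∈ A) (hmA : ∀ y ∈ m, y ∉ A)
    (hlx : ∀ y v, [y, v] <+ l → G.Adj y x → G.Adj x v)
    (hmx : ∀ u ∈ m, ∀ v ∈ m, u ≠ v → G.Adj x u → G.Adj x v → G.Adj u v) :
    IsPEO G (l ++ x :: m) := by
  refine hl.append (isPEO_cons_iff.2 ⟨hmx, hm⟩) fun y hy u hu v hv huv hyu hyv => ?_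
  have hyx : y ≠ x := by rintro rfl; exact hG.1 (hlA y hy)
  have hx : ∀ w ∈ x :: m, G.Adj y w → w = x := fun w hw hyw => by
    by_contra hwx
    exact hmA w ((mem_cons.1 hw).resolve_left hwx) ((hG.2 y w hyw hyx hwx).1 (hlA y hy))
  obtain rfl := hx u hu hyu
  rcases pair_sublist_append_iff.1 hv with hv | hv | ⟨-, hv⟩
  · exact hlx y v hv hyu
  · rcases mem_cons.1 (mem_of_pair_sublist hv).1 with rfl | hym
    exacts [absurd rfl hyx, absurd (hlA y hy) (hmA y hym)]
  · exact absurd (hx v hv hyv).symm huv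

lemma IsOrdering.perm_append_cons_filter {ρ : List V} (hL : IsOrdering L) (hxA : x ∉ A)
    (hρ : ρ ~ L.filter (fun w => w ∈ A)) :
    IsOrdering (ρ ++ x :: L.filter (fun w => w ≠ x ∧ w ∉ A)) := by
  have hρA : ∀ w, w ∈ ρ ↔ w ∈ A := fun w => by simp [hρ.mem_iff, hL.2]
  refine ⟨nodup_append.2 ⟨hρ.nodup_iff.2 (hL.1.sublist filter_sublist),
    nodup_cons.2 ⟨by simp, hL.1.sublist filter_sublist⟩, ?_⟩, fun w => ?_⟩
  · rintro p hp q hq rfl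
    rcases mem_cons.1 hq with rfl | hq
    · exact hxA ((hρA p).1 hp)
    · simp only [mem_filter, decide_eq_true_eq] at hq
      exact hq.2.2 ((hρA p).1 hp)
  · by_cases hwA : w ∈ A
    · exact mem_append_left _ ((hρA w).2 hwA)
    by_cases hwx : w = x
    · exact hwx ▸ mem_append_right _ mem_cons_self
    exact mem_append_right _ (mem_cons_of_mem _ (by simp [hL.2, hwx, hwA]))

lemma exists_isOrdering_fillEdges_subset_filter (hL : IsOrdering L) (hx : Separates G x A)
    (hA : G.IsClique (G.neighborSet x ∩ A)) (hB : G.IsClique (G.neighborSet x \ A)) :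
    ∃ τ, IsOrdering τ ∧ fillEdges G τ ⊆ (fillEdges G L).filter (IsSideEdge x A) := by
  set F := fillEdges G L
  set H := G ⊔ fromEdgeSet ↑(F.filter (IsSideEdge x A))
  have hH : ∀ p q, H.Adj p q ↔ G.Adj p q ∨ (s(p, q) ∈ F ∧ IsSideEdge x A s(p, q) ∧ p ≠ q) := by
    simp [H, and_assoc]
  have hHx : ∀ w, H.Adj x w ↔ G.Adj x w := fun w => by simp [hH, isSideEdge_mk]
  have hHsep : Separates H x A := ⟨hx.1, fun p q hpq hp hq => by
    rcases (hH p q).1 hpq with h | ⟨-, h, -⟩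
    exacts [hx.2 p q h hp hq, (isSideEdge_mk.1 h).2.2]⟩
  have hHF : IsPEO (G ⊔ fromEdgeSet ↑F) L :=
    (fillList_eq_zero_iff_isPEO hL.1 fun p _ _ => hL.2 p).1 (fillList_sup_fillEdges_eq_zero G L)
  -- on either side of `x`, `H` agrees with the filled graph, so `L` restricts to a PEO of `H`
  have hside : ∀ l, l <+ L → (∀ p ∈ l, ∀ q ∈ l, p ≠ x ∧ (p ∈ A ↔ q ∈ A)) → IsPEO H l :=
    fun l hl hA => (isPEO_congr fun p hp q hq => by
      simp [hH, isSideEdge_mk, hA p hp q hq, (hA q hq p hp).1]).2 (hHF.sublist hl)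
  set σA := L.filter (fun w => w ∈ A)
  set σB := L.filter (fun w => w ≠ x ∧ w ∉ A)
  have hσA : ∀ w, w ∈ σA ↔ w ∈ A := by simp [σA, hL.2]
  have hσB : ∀ w, w ∈ σB ↔ w ≠ x ∧ w ∉ A := by simp [σB, hL.2]
  obtain ⟨l₀, l₁, hperm, hP, hl₁⟩ :=
    (hside σA filter_sublist fun p hp q hq => ⟨fun h => hx.1 (h ▸ (hσA p).1 hp),
      iff_of_true ((hσA p).1 hp) ((hσA q).1 hq)⟩).exists_perm_append_clique
      (hL.1.sublist filter_sublist) (hA.mono le_sup_left) fun u hu => (hσA u).2 hu.2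
  have hnd : (l₀ ++ l₁).Nodup := hperm.nodup_iff.2 (hL.1.sublist filter_sublist)
  have hmem : ∀ w, w ∈ l₀ ++ l₁ ↔ w ∈ A := fun w => hperm.mem_iff.trans (hσA w)
  have hτ := hL.perm_append_cons_filter hx.1 hperm
  refine ⟨_, hτ, fillEdges_subset_of_isPEO hτ (hP.append_cons_of_separates hHsep
    (hside σB filter_sublist fun p hp q hq => ⟨((hσB p).1 hp).1,
      iff_of_false ((hσB p).1 hp).2 ((hσB q).1 hq).2⟩)
    (fun y hy => (hmem y).1 hy) (fun y hy => ((hσB y).1 hy).2) ?_ ?_)⟩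
  · intro y v hyv hyx
    have hy : y ∈ l₁ := (hl₁ y).2 ⟨(hHx y).1 hyx.symm, (hmem y).1 (mem_of_pair_sublist hyv).1⟩
    exact (hHx v).2 ((hl₁ v).1 (mem_right_of_pair_sublist_append hnd hyv hy)).1
  · intro u hu v hv huv hxu hxv
    exact Or.inl (hB ⟨(hHx u).1 hxu, ((hσB u).1 hu).2⟩ ⟨(hHx v).1 hxv, ((hσB v).1 hv).2⟩ huv)

theorem fillEdges_isSideEdge_of_fillList_eq_minFillIn (hL : IsOrdering L)
    (hmin : fillList G L = minFillIn G) (hx : Separates G x A)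
    (hA : G.IsClique (G.neighborSet x ∩ A)) (hB : G.IsClique (G.neighborSet x \ A)) :
    ∀ e ∈ fillEdges G L, IsSideEdge x A e := by
  obtain ⟨τ, hτ, hsub⟩ := exists_isOrdering_fillEdges_subset_filter hL hx hA hB
  refine Finset.filter_card_eq (le_antisymm (Finset.card_filter_le _ _) ?_)
  calc (fillEdges G L).card = fillList G L := (fillList_eq_card_fillEdges G L).symm
    _ = minFillIn G := hmin
    _ ≤ fillList G τ := Nat.sInf_le ⟨τ, hτ, rfl⟩
    _ = (fillEdges G τ).card := fillList_eq_card_fillEdges G τ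
    _ ≤ _ := Finset.card_le_card hsub

lemma adj_of_adj_elimList_of_isSideEdge {L₁ L₂ : List V} {p q : V}
    (hF : ∀ e ∈ fillEdges G (L₁ ++ x :: L₂), IsSideEdge x A e) (hx : Separates G x A)
    (hp : (elimList G L₁).Adj x p) (hq : (elimList G L₁).Adj x q) (hpq : p ≠ q) :
    G.Adj x p ∧ G.Adj x q ∧ (p ∈ A ↔ q ∈ A) := by
  rw [fillEdges_append, fillEdges] at hF
  have hF₁ : ∀ e ∈ fillEdges G L₁, IsSideEdge x A e := fun e he =>
    hF e (Finset.mem_union_left _ he)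
  have hxG : ∀ w, (elimList G L₁).Adj x w → G.Adj x w := fun w hw =>
    (adj_elimList hw).resolve_right fun h => (isSideEdge_mk.1 (hF₁ _ h)).1 rfl
  refine ⟨hxG p hp, hxG q hq, ?_⟩
  by_cases hadj : (elimList G L₁).Adj p q
  · rcases adj_elimList hadj with h | h
    · exact hx.2 p q h hp.ne' hq.ne'
    · exact (isSideEdge_mk.1 (hF₁ _ h)).2.2
  · have hD : s(p, q) ∈ deficiencyFinset (elimList G L₁) x :=
      mem_deficiencyFinset.2 ⟨hpq, hp, hq, hadj⟩
    exact (isSideEdge_mk.1 (hF _ (Finset.mem_union_right _ (Finset.mem_union_left _ hD)))).2.2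

lemma reachable_deleteSet_of_reachable
    (h : ∀ p q, G.Adj x p → G.Adj x q → (deleteSet G {x}).Reachable p q) {u v : V}
    (huv : G.Reachable u v) (hu : u ≠ x) (hv : v ≠ x) : (deleteSet G {x}).Reachable u v := by
  suffices ∀ {w v} (W : G.Walk w v), v ≠ x → (w ≠ x → (deleteSet G {x}).Reachable w v) ∧
      (w = x → ∀ p, G.Adj x p → (deleteSet G {x}).Reachable p v) from
    huv.elim fun W => (this W hv).1 hu
  intro w v W hv
  induction W with
  | nil => exact ⟨fun _ => Reachable.refl _, fun h => absurd h hv⟩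
  | @cons u w v huw W ih =>
    refine ⟨fun hu => ?_, ?_⟩
    · by_cases hw : w = x
      · exact (ih hv).2 hw u (hw ▸ huw.symm)
      · exact (Adj.reachable (⟨huw, hu, hw⟩ : (deleteSet G {x}).Adj u w)).trans ((ih hv).1 hw)
    · rintro rfl p hp
      exact (h p w hp huw).trans ((ih hv).1 huw.ne')

lemma separates_setOf_reachable {a : V} (ha : a ≠ x) :
    Separates G x {w | (deleteSet G {x}).Reachable a w} := by
  refine ⟨fun h => ?_, fun u v huv hu hv => ?_⟩
  · obtain ⟨W⟩ := (h : (deleteSet G {x}).Reachable a x).symm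
    cases W with
    | nil => exact ha rfl
    | cons h _ => exact h.2.1 (Set.mem_singleton x)
  · have huv' : (deleteSet G {x}).Adj u v := ⟨huv, hu, hv⟩
    exact ⟨fun h => h.trans huv'.reachable, fun h => h.trans huv'.symm.reachable⟩

lemma not_reachable_deleteSet_of_adj_iff {a b : V} (hnbr : ∀ w, G.Adj x w ↔ w = a ∨ w = b)
    (hcut : ∃ u v, u ≠ x ∧ v ≠ x ∧ G.Reachable u v ∧ ¬ (deleteSet G {x}).Reachable u v) :
    ¬ (deleteSet G {x}).Reachable a b := fun hab => by
  obtain ⟨u, v, hu, hv, huv, hnot⟩ := hcut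
  refine hnot (reachable_deleteSet_of_reachable (fun p q hp hq => ?_) huv hu hv)
  rcases (hnbr p).1 hp with rfl | rfl <;> rcases (hnbr q).1 hq with rfl | rfl
  exacts [Reachable.refl _, hab, hab.symm, Reachable.refl _]

end Separation

/-- if `x` is a cut vertex of degree 2, then in any minimum fill-in
ordering, at the step when `x` is eliminated, `x` is simplicial in the current
elimination graph and has degree at most 1 there. -/
theorem stmt_16 (G : SimpleGraph V) (x : V)
    (hdeg : G.degree x = 2)
    (hcut : ∃ u v : V, u ≠ x ∧ v ≠ x ∧ G.Reachable u v ∧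
      ¬ (deleteSet G {x}).Reachable u v) :
    ∀ L : List V, IsOrdering L → fillList G L = minFillIn G →
      ∀ L1 L2 : List V, L = L1 ++ x :: L2 →
        IsSimplicial (elimList G L1) x ∧ (elimList G L1).degree x ≤ 1 := by
  rintro L hL hmin L1 L2 rfl
  obtain ⟨a, b, -, hN⟩ := Finset.card_eq_two.1 hdeg
  have hnbr : ∀ w, G.Adj x w ↔ w = a ∨ w = b := fun w => by
    rw [← mem_neighborFinset, hN]
    simp
  set A := {w | (deleteSet G {x}).Reachable a w}
  have hx : Separates G x A := separates_setOf_reachable ((hnbr a).2 (Or.inl rfl)).ne'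
  have haA : a ∈ A := Reachable.refl a
  have hbA : b ∉ A := not_reachable_deleteSet_of_adj_iff hnbr hcut
  have hside : ∀ p q, G.Adj x p → G.Adj x q → (p ∈ A ↔ q ∈ A) → p = q := by
    intro p q hp hq hpq
    rcases (hnbr p).1 hp with rfl | rfl <;> rcases (hnbr q).1 hq with rfl | rfl <;> tauto
  have hF := fillEdges_isSideEdge_of_fillList_eq_minFillIn hL hmin hx
    (fun p hp q hq => absurd (hside p q hp.1 hq.1 (iff_of_true hp.2 hq.2)))
    (fun p hp q hq => absurd (hside p q hp.1 hq.1 (iff_of_false hp.2 hq.2)))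
  refine isSimplicial_and_degree_le_one fun p q hp hq => by_contra fun hpq => ?_
  obtain ⟨hxp, hxq, hpq'⟩ := adj_of_adj_elimList_of_isSideEdge hF hx hp hq hpq
  exact hpq (hside p q hxp hxq hpq')
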